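/- For any density matrix ρ on ℂ^d, the robustness of coherence satisfies R(ρ) ≤ C_{ℓ1}(ρ) = Σ_{x≠y}|ρ_{xy}|, with the maximum possible value d−1 attained exactly when ρ is a maximally coherent pure state, i.e., ρ = |ψ⟩⟨ψ| with |⟨x|ψ⟩| = 1/√d for all x. -/

import Mathlib

/-!
Write a positive semidefinite matrix as a Gram matrix, `M x y = ⟪b x, b y⟫`; Cauchy–Schwarz
gives `‖M x y‖ ≤ √(M x x) √(M y y)`. For a witness `X` of the SDP (unit diagonal) this means
`‖X x y‖ ≤ 1`, and since `Tr(ρX) - Tr ρ = ∑_{x ≠ y} ρ x y X y x`, every feasible value is at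
most `C_{ℓ1}(ρ)`. For `ρ` itself it gives `C_{ℓ1}(ρ) ≤ (∑ √ρ_xx)² - 1 ≤ d - 1`, the last step
being Cauchy–Schwarz once more. Equality forces `ρ_xx = 1/d` for all `x` and all Gram vectors
to be collinear, i.e. `ρ = |ψ⟩⟨ψ|` with `|ψ x| = 1/√d`; conversely, for such `ψ` the witness
`X = d |ψ⟩⟨ψ|` reaches the value `d - 1`.
-/

open scoped Matrix ComplexOrder InnerProductSpace
open Finset RCLike

variable {ι 𝕜 : Type*} [Fintype ι] [RCLike 𝕜]

theorem Fintype.sum_sum_ite_ne [DecidableEq ι] {M : Type*} [AddCommGroup M] (f : ι → ι → M) :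
    ∑ x, ∑ y, (if x ≠ y then f x y else 0) = ∑ x, ∑ y, f x y - ∑ x, f x x := by
  rw [eq_sub_iff_add_eq, ← sum_add_distrib]
  refine Finset.sum_congr rfl fun x _ => ?_
  rw [← Fintype.sum_ite_eq x (f x), ← sum_add_distrib]
  exact Finset.sum_congr rfl fun y _ => by split_ifs <;> simp_all

theorem Fintype.sum_sum_ite_ne_mul [DecidableEq ι] {R : Type*} [CommRing R] (q : ι → R) :
    ∑ x, ∑ y, (if x ≠ y then q x * q y else 0) = (∑ x, q x) ^ 2 - ∑ x, q x ^ 2 := by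
  simp_rw [Fintype.sum_sum_ite_ne, sq, sum_mul_sum]

theorem Fintype.sum_sum_eq_sum_sum_iff_of_le {κ : Type*} [Fintype κ] {f g : ι → κ → ℝ}
    (h : ∀ x y, f x y ≤ g x y) :
    ∑ x, ∑ y, f x y = ∑ x, ∑ y, g x y ↔ ∀ x y, f x y = g x y := by
  simp_rw [← Fintype.sum_prod_type']
  rw [sum_eq_sum_iff_of_le fun p _ => h p.1 p.2]
  simp [Prod.forall]

theorem eq_one_div_sqrt_card_of_sum_eq {q : ι → ℝ} (hq2 : ∑ x, q x ^ 2 = 1)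
    (hq : ∑ x, q x = √(Fintype.card ι)) (x : ι) : q x = 1 / √(Fintype.card ι) := by
  have hd : 0 < (Fintype.card ι : ℝ) := by
    exact_mod_cast Fintype.card_pos_iff.mpr ⟨x⟩
  have hvar : ∑ y, (q y - 1 / √(Fintype.card ι)) ^ 2 = 0 := by
    simp_rw [sub_sq, sum_add_distrib, sum_sub_distrib, ← sum_mul, ← mul_sum, hq2, hq]
    simp [Real.sq_sqrt hd.le]
    field_simp
    ring
  have := (Fintype.sum_eq_zero_iff_of_nonneg fun y => sq_nonneg _).mp hvar
  exact sub_eq_zero.mp (pow_eq_zero_iff two_ne_zero |>.mp (congrFun this x))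

namespace Matrix

def l1Coherence [DecidableEq ι] (ρ : Matrix ι ι 𝕜) : ℝ := ∑ x, ∑ y, if x ≠ y then ‖ρ x y‖ else 0

theorem trace_mul_sub_trace_eq_sum_ne [DecidableEq ι] {ρ X : Matrix ι ι 𝕜} (hX : ∀ x, X x x = 1) :
    trace (ρ * X) - trace ρ = ∑ x, ∑ y, if x ≠ y then ρ x y * X y x else 0 := by
  rw [Fintype.sum_sum_ite_ne]
  simp [trace, mul_apply, hX]

theorem PosSemidef.exists_gram {M : Matrix ι ι 𝕜} (hM : M.PosSemidef) :
    ∃ b : ι → EuclideanSpace 𝕜 ι, ∀ x y, M x y = ⟪b x, b y⟫_𝕜 := by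
  classical
  obtain ⟨B, rfl⟩ : ∃ B : Matrix ι ι 𝕜, M = Bᴴ * B := by
    open scoped MatrixOrder in exact CStarAlgebra.nonneg_iff_eq_star_mul_self.mp hM.nonneg
  refine ⟨fun x => WithLp.toLp 2 fun k => B k x, fun x y => ?_⟩
  simp [mul_apply, PiLp.inner_apply, mul_comm]

theorem PosSemidef.norm_apply_le {M : Matrix ι ι 𝕜} (hM : M.PosSemidef) (x y : ι) :
    ‖M x y‖ ≤ √(re (M x x)) * √(re (M y y)) := by
  obtain ⟨b, hb⟩ := hM.exists_gram
  simpa only [hb, ← norm_eq_sqrt_re_inner] using norm_inner_le_norm (b x) (b y)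

theorem PosSemidef.norm_apply_le_one {X : Matrix ι ι 𝕜} (hX : X.PosSemidef)
    (hXdiag : ∀ x, X x x = 1) (x y : ι) : ‖X x y‖ ≤ 1 := by
  simpa [hXdiag] using hX.norm_apply_le x y

theorem PosSemidef.sum_sq_sqrt_re_diag {M : Matrix ι ι 𝕜} (hM : M.PosSemidef) :
    ∑ x, √(re (M x x)) ^ 2 = re (trace M) := by
  simp [trace, Real.sq_sqrt (nonneg_iff.mp hM.diag_nonneg).1]

theorem re_trace_mul_sub_trace_le_l1Coherence [DecidableEq ι] (ρ : Matrix ι ι 𝕜)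
    {X : Matrix ι ι 𝕜} (hX : X.PosSemidef) (hXdiag : ∀ x, X x x = 1) :
    re (trace (ρ * X) - trace ρ) ≤ l1Coherence ρ := by
  rw [trace_mul_sub_trace_eq_sum_ne hXdiag, map_sum]
  refine sum_le_sum fun x _ => ?_
  rw [map_sum]
  refine sum_le_sum fun y _ => ?_
  split_ifs
  · calc re (ρ x y * X y x) ≤ ‖ρ x y * X y x‖ := re_le_norm _
      _ ≤ ‖ρ x y‖ * 1 := by
        rw [norm_mul]; gcongr; exact hX.norm_apply_le_one hXdiag y x
      _ = ‖ρ x y‖ := mul_one _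
  · simp

theorem PosSemidef.l1Coherence_le_sum_ne [DecidableEq ι] {ρ : Matrix ι ι 𝕜} (hρ : ρ.PosSemidef) :
    l1Coherence ρ ≤
      ∑ x, ∑ y, if x ≠ y then √(re (ρ x x)) * √(re (ρ y y)) else 0 :=
  sum_le_sum fun x _ => sum_le_sum fun y _ => by
    split_ifs
    · exact hρ.norm_apply_le x y
    · rfl

theorem PosSemidef.l1Coherence_le_card_sub_one [DecidableEq ι] {ρ : Matrix ι ι 𝕜}
    (hρ : ρ.PosSemidef) (htr : trace ρ = 1) : l1Coherence ρ ≤ Fintype.card ι - 1 := by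
  have hq2 := hρ.sum_sq_sqrt_re_diag
  rw [htr, one_re] at hq2
  calc l1Coherence ρ ≤ _ := hρ.l1Coherence_le_sum_ne
    _ = (∑ x, √(re (ρ x x))) ^ 2 - 1 := by rw [Fintype.sum_sum_ite_ne_mul, hq2]
    _ ≤ Fintype.card ι * 1 - 1 := by
      rw [← hq2]; gcongr; exact sq_sum_le_card_mul_sum_sq
    _ = Fintype.card ι - 1 := by rw [mul_one]

theorem PosSemidef.exists_eq_vecMulVec_of_norm_apply_eq {M : Matrix ι ι 𝕜} (hM : M.PosSemidef)
    {i : ι} (hi : M i i ≠ 0) (h : ∀ j ≠ i, ‖M i j‖ = √(re (M i i)) * √(re (M j j))) :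
    ∃ ψ : ι → 𝕜, M = vecMulVec ψ (star ψ) := by
  obtain ⟨b, hb⟩ := hM.exists_gram
  have hbi : b i ≠ 0 := fun h0 => hi (by simp [hb, h0])
  have hcol : ∀ j, ∃ r : 𝕜, b j = r • b i := by
    intro j
    rcases eq_or_ne j i with rfl | hj
    · exact ⟨1, (one_smul _ _).symm⟩
    · have := h j hj
      simp only [hb, ← norm_eq_sqrt_re_inner] at this
      have hiff := (norm_inner_eq_norm_tfae 𝕜 (b i) (b j)).out 0 2
      exact (hiff.mp this).resolve_left hbi
  choose c hc using hcol
  refine ⟨fun x => star (c x) * ‖b i‖, ?_⟩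
  ext x y
  simp only [vecMulVec_apply, hb, hc x, hc y, inner_smul_left, inner_smul_right,
    inner_self_eq_norm_sq_to_K, Pi.star_apply, star_mul', RCLike.star_def, conj_conj, conj_ofReal]
  ring

theorem PosSemidef.exists_eq_vecMulVec_of_card_sub_one_le_l1Coherence [DecidableEq ι]
    {ρ : Matrix ι ι 𝕜} (hρ : ρ.PosSemidef) (htr : trace ρ = 1)
    (h : (Fintype.card ι : ℝ) - 1 ≤ l1Coherence ρ) :
    ∃ ψ : ι → 𝕜, (∀ x, ‖ψ x‖ = 1 / √(Fintype.card ι)) ∧ ρ = vecMulVec ψ (star ψ) := by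
  set q : ι → ℝ := fun x => √(re (ρ x x))
  have hq2 : ∑ x, q x ^ 2 = 1 := by simpa [htr] using hρ.sum_sq_sqrt_re_diag
  have hle : ∀ x y, (if x ≠ y then ‖ρ x y‖ else 0) ≤ if x ≠ y then q x * q y else 0 :=
    fun x y => by split_ifs <;> simp [q, hρ.norm_apply_le]
  have hcs : (∑ x, q x) ^ 2 ≤ Fintype.card ι := by
    simpa [hq2] using sq_sum_le_card_mul_sum_sq (s := univ) (f := q)
  have hpair := Fintype.sum_sum_ite_ne_mul q
  have hl1 := hρ.l1Coherence_le_sum_ne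
  have hsum : ∑ x, q x = √(Fintype.card ι) := by
    rw [← Real.sqrt_sq (sum_nonneg fun x _ => Real.sqrt_nonneg _)]
    congr 1
    linarith
  have heq : l1Coherence ρ = ∑ x, ∑ y, if x ≠ y then q x * q y else 0 := by linarith
  have hsat : ∀ x y, x ≠ y → ‖ρ x y‖ = q x * q y := fun x y hxy => by
    simpa [hxy] using (Fintype.sum_sum_eq_sum_sum_iff_of_le hle).mp heq x y
  obtain ⟨i, -⟩ := nonempty_of_sum_ne_zero (hq2.trans_ne one_ne_zero)
  have hd : 0 < (Fintype.card ι : ℝ) := Nat.cast_pos.mpr (Fintype.card_pos_iff.mpr ⟨i⟩)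
  have hqi : 0 < q i := eq_one_div_sqrt_card_of_sum_eq hq2 hsum i ▸ by positivity
  have hii : ρ i i ≠ 0 := fun h0 => by simp [q, h0] at hqi
  obtain ⟨ψ, rfl⟩ := hρ.exists_eq_vecMulVec_of_norm_apply_eq hii fun j hj => hsat i j hj.symm
  refine ⟨ψ, fun x => ?_, rfl⟩
  rw [← eq_one_div_sqrt_card_of_sum_eq hq2 hsum x]
  simp [q, vecMulVec_apply, RCLike.star_def, RCLike.mul_conj]

theorem exists_posSemidef_diag_eq_one_trace_mul_eq_card (ψ : ι → 𝕜)
    (hψ : ∀ x, ‖ψ x‖ = 1 / √(Fintype.card ι)) :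
    ∃ X : Matrix ι ι 𝕜, X.PosSemidef ∧ (∀ x, X x x = 1) ∧
      trace (vecMulVec ψ (star ψ) * X) = Fintype.card ι := by
  have hψ2 : ∀ x, star (ψ x) * ψ x = (Fintype.card ι : 𝕜)⁻¹ := fun x => by
    rw [RCLike.star_def, RCLike.conj_mul, hψ, ← ofReal_pow, one_div, inv_pow,
      Real.sq_sqrt (Nat.cast_nonneg _), ofReal_inv, ofReal_natCast]
  refine ⟨(Fintype.card ι : 𝕜) • vecMulVec ψ (star ψ),
    (posSemidef_vecMulVec_self_star ψ).smul (Nat.cast_nonneg _), fun x => ?_, ?_⟩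
  · have : Nonempty ι := ⟨x⟩
    rw [smul_apply, vecMulVec_apply, Pi.star_apply, mul_comm, hψ2, smul_eq_mul,
      mul_inv_cancel₀ (Nat.cast_ne_zero.mpr Fintype.card_ne_zero)]
  · rw [mul_smul_comm, vecMulVec_mul_vecMulVec, trace_smul, trace_vecMulVec]
    simp_rw [dotProduct, Pi.smul_apply, Pi.star_apply, smul_eq_mul, mul_left_comm (ψ _),
      mul_comm (ψ _), ← mul_sum, hψ2, sum_const, card_univ, nsmul_eq_mul]
    rcases eq_or_ne (Fintype.card ι : 𝕜) 0 with h | h <;> simp [h]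

end Matrix

theorem robustness_le_l1_and_max_general {d : ℕ}
    (ρ : Matrix (Fin d) (Fin d) ℂ) (hρ : ρ.PosSemidef) (hρtr : ρ.trace = 1)
    (R : ℝ)
    (hR : IsGreatest {s : ℝ | ∃ X : Matrix (Fin d) (Fin d) ℂ,
        X.PosSemidef ∧ (∀ x, X x x = 1) ∧ (s : ℂ) = (ρ * X).trace - 1} R) :
    (R ≤ ∑ x, ∑ y, if x ≠ y then ‖ρ x y‖ else 0) ∧
    (R = d - 1 ↔ ∃ ψ : Fin d → ℂ, (∀ x, ‖ψ x‖ = 1 / Real.sqrt d) ∧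
        ρ = Matrix.of fun x y => ψ x * star (ψ y)) := by
  have hR_le : R ≤ Matrix.l1Coherence ρ := by
    obtain ⟨X, hX, hXdiag, hRX⟩ := hR.1
    simpa [hρtr, ← hRX] using Matrix.re_trace_mul_sub_trace_le_l1Coherence ρ hX hXdiag
  refine ⟨hR_le, fun hRd => ?_, ?_⟩
  · obtain ⟨ψ, hψ, hρψ⟩ := hρ.exists_eq_vecMulVec_of_card_sub_one_le_l1Coherence hρtr
      (by simpa [hRd] using hR_le)
    exact ⟨ψ, by simpa using hψ, hρψ⟩
  · rintro ⟨ψ, hψ, rfl⟩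
    obtain ⟨X, hX, hXdiag, htr⟩ :=
      Matrix.exists_posSemidef_diag_eq_one_trace_mul_eq_card ψ (by simpa using hψ)
    rw [Fintype.card_fin] at htr
    have hge : (d : ℝ) - 1 ≤ R := hR.2 ⟨X, hX, hXdiag,
      show _ = (Matrix.vecMulVec ψ (star ψ) * X).trace - 1 by push_cast [htr]; rfl⟩
    have hle := hρ.l1Coherence_le_card_sub_one hρtr
    simp only [Fintype.card_fin] at hle
    linarith

/-- For any density matrix `ρ` on `ℂ^d`, the robustness of coherence `R` (in SDP form)
satisfies `R(ρ) ≤ C_{ℓ1}(ρ) = Σ_{x≠y}|ρ_{xy}|`, and the maximal possible value `d − 1`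
is attained exactly when `ρ` is a maximally coherent pure state, i.e.
`ρ = |ψ⟩⟨ψ|` with `|⟨x|ψ⟩| = 1/√d` for all `x`. -/
theorem robustness_le_l1_and_max {d : ℕ} (hd : 0 < d)
    (ρ : Matrix (Fin d) (Fin d) ℂ) (hρ : ρ.PosSemidef) (hρtr : ρ.trace = 1)
    (R : ℝ)
    (hR : IsGreatest {s : ℝ | ∃ X : Matrix (Fin d) (Fin d) ℂ,
        X.PosSemidef ∧ (∀ x, X x x = 1) ∧ (s : ℂ) = (ρ * X).trace - 1} R) :
    (R ≤ ∑ x, ∑ y, if x ≠ y then ‖ρ x y‖ else 0) ∧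
    (R = d - 1 ↔ ∃ ψ : Fin d → ℂ, (∀ x, ‖ψ x‖ = 1 / Real.sqrt d) ∧
        ρ = Matrix.of fun x y => ψ x * star (ψ y)) :=
  robustness_le_l1_and_max_general ρ hρ hρtr R hR
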